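/- Every formal term t built from the variables X and the ternary symbol w is equal, modulo the equational theory generated by the 3-wnu identities, to some term t′ belonging to the set A of normal forms. -/
import Mathlib


/-- Formal terms built from variables in `V` and a single ternary operation symbol `w`. -/
inductive Term3 (V : Type) : Type
  | var : V → Term3 V
  | w : Term3 V → Term3 V → Term3 V → Term3 V
deriving DecidableEq

/-- Evaluation of a term in an algebra `(B, f)` under a variable assignment `σ`. -/
def Term3.eval {V B : Type} (f : B → B → B → B) (σ : V → B) : Term3 V → B
  | .var v => σ v
  | .w a b c => f (a.eval f σ) (b.eval f σ) (c.eval f σ)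

/-- Renaming/substitution of variables in a term. -/
def Term3.rename {V V' : Type} (ρ : V → V') : Term3 V → Term3 V'
  | .var v => .var (ρ v)
  | .w a b c => .w (a.rename ρ) (b.rename ρ) (c.rename ρ)

/-- A ternary operation `f` satisfies the 3-wnu identities:
`f(x,x,x) = x` and `f(x,x,y) = f(x,y,x) = f(y,x,x)`. -/
def Is3WNU {B : Type} (f : B → B → B → B) : Prop :=
  (∀ x, f x x x = x) ∧ ∀ x y, f x x y = f x y x ∧ f x y x = f y x x

/-- Two terms are equal modulo the equational theory generated by the 3-wnu identities,
i.e. they evaluate equally in every algebra satisfying the 3-wnu identities. -/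
def EqWnu3 {V : Type} (t s : Term3 V) : Prop :=
  ∀ (B : Type) (f : B → B → B → B) (σ : V → B), Is3WNU f → t.eval f σ = s.eval f σ

/-- The set `A` of 3-wnu normal forms (over the countably infinite variable set `ℕ`):
every variable is a normal form, and `w(a₁,a₂,a₃)` is a normal form whenever
`a₁,a₂,a₃` are normal forms with `a₁ ≠ a₂` and `a₁ ≠ a₃`. -/
inductive IsNF3 : Term3 ℕ → Prop
  | var (n : ℕ) : IsNF3 (.var n)
  | w (a b c : Term3 ℕ) : IsNF3 a → IsNF3 b → IsNF3 c → a ≠ b → a ≠ c →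
      IsNF3 (.w a b c)

/-- The normal-form operation `w^A`:
`w^A(a,a,a) = a`; `w^A(a,a,b) = w^A(a,b,a) = w^A(b,a,a) = w(b,a,a)` for `a ≠ b`;
and `w^A(a₁,a₂,a₃) = w(a₁,a₂,a₃)` for pairwise distinct `a₁,a₂,a₃`. -/
def wA3 (a b c : Term3 ℕ) : Term3 ℕ :=
  if a = b then (if b = c then a else .w c a a)
  else if a = c then .w b a a
  else if b = c then .w a b b
  else .w a b c

/-- The subterm relation `⪯` on normal forms: the reflexive transitive closure of
`{(a,b) : a,b ∈ A, ∃ c d e ∈ A, b = w(c,d,e) ∧ a ∈ {c,d,e}}`. -/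
def Sub3 (a b : Term3 ℕ) : Prop :=
  Relation.ReflTransGen
    (fun s t => IsNF3 s ∧ IsNF3 t ∧ ∃ c d e : Term3 ℕ,
      IsNF3 c ∧ IsNF3 d ∧ IsNF3 e ∧ t = .w c d e ∧ (s = c ∨ s = d ∨ s = e)) a b

lemma wA3_isNF {a b c : Term3 ℕ} (ha : IsNF3 a) (hb : IsNF3 b) (hc : IsNF3 c) :
    IsNF3 (wA3 a b c) := by
  unfold wA3
  split_ifs with h1 h2 h3 h4 <;> subst_vars
  · exact ha
  · exact IsNF3.w _ _ _ hc ha ha (fun h => h2 h.symm) (fun h => h2 h.symm)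
  · exact IsNF3.w _ _ _ hb ha ha (fun h => h1 h.symm) (fun h => h1 h.symm)
  · exact IsNF3.w _ _ _ ha hb hb h1 h1
  · exact IsNF3.w _ _ _ ha hb hc h1 h3

lemma wA3_eq (a b c : Term3 ℕ) : EqWnu3 (.w a b c) (wA3 a b c) := by
  intro B f σ hf
  obtain ⟨h1, h2⟩ := hf
  unfold wA3
  split_ifs with ha hb hc hd <;> subst_vars
  · exact h1 _
  · show f _ _ _ = f _ _ _
    rw [(h2 _ _).1, (h2 _ _).2]
  · show f _ _ _ = f _ _ _
    rw [(h2 _ _).2]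
  · rfl
  · rfl

/-- Every formal term built from the variables and the ternary symbol `w`
is equal, modulo the equational theory generated by the 3-wnu identities, to some term
belonging to the set `A` of normal forms. -/
theorem statement4 (t : Term3 ℕ) : ∃ t' : Term3 ℕ, IsNF3 t' ∧ EqWnu3 t t' := by
  induction t with
  | var v => exact ⟨.var v, IsNF3.var v, fun B f σ _ => rfl⟩
  | w a b c iha ihb ihc =>
    obtain ⟨a', hna, hea⟩ := iha
    obtain ⟨b', hnb, heb⟩ := ihb
    obtain ⟨c', hnc, hec⟩ := ihc
    refine ⟨wA3 a' b' c', wA3_isNF hna hnb hnc, fun B f σ hf => ?_⟩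
    have := wA3_eq a' b' c' B f σ hf
    simp only [Term3.eval] at this ⊢
    rw [hea B f σ hf, heb B f σ hf, hec B f σ hf, this]
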